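/- The Hörmander intersection index satisfies (X, Y, Z, W) = −(Z, W, X, Y) for Lagrangian planes X, Y, Z, W with Z, W each transversal to X and Y (and X, Y each transversal to Z and W). -/

import Mathlib

/-- A subspace `L` of a symplectic vector space `(V, ω)` is Lagrangian if `ω` vanishes on `L`
and `L` has half the dimension of `V`. -/
def IsLagrangian {V : Type*} [AddCommGroup V] [Module ℝ V]
    (ω : LinearMap.BilinForm ℝ V) (L : Submodule ℝ V) : Prop :=
  (∀ x ∈ L, ∀ y ∈ L, ω x y = 0) ∧ 2 * Module.finrank ℝ L = Module.finrank ℝ V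

/-- The projection of `V` onto `Z` along `X` (defined to be `0` when `Z` and `X` are not
complementary). -/
noncomputable def projAlong {V : Type*} [AddCommGroup V] [Module ℝ V]
    (Z X : Submodule ℝ V) : V →ₗ[ℝ] V :=
  letI := Classical.dec (IsCompl Z X)
  if h : IsCompl Z X then Z.subtype ∘ₗ Z.linearProjOfIsCompl X h else 0

/-- The Hörmander quadratic form `Q_Z(y) = ω(p_Z^X y, y)`. -/
noncomputable def hQuad {V : Type*} [AddCommGroup V] [Module ℝ V]
    (ω : LinearMap.BilinForm ℝ V) (X Z : Submodule ℝ V) (y : V) : ℝ :=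
  ω (projAlong Z X y) y

/-- The positive index of inertia of `Q` restricted to the subspace `Y`: the largest dimension
of a subspace of `Y` on which `Q` is positive definite. -/
noncomputable def posIndexOn {V : Type*} [AddCommGroup V] [Module ℝ V]
    (Q : V → ℝ) (Y : Submodule ℝ V) : ℕ :=
  sSup {d | ∃ W : Submodule ℝ V, W ≤ Y ∧ Module.finrank ℝ W = d ∧ ∀ x ∈ W, x ≠ 0 → 0 < Q x}

/-- The negative index of inertia of `Q` on `Y`. -/
noncomputable def negIndexOn {V : Type*} [AddCommGroup V] [Module ℝ V]
    (Q : V → ℝ) (Y : Submodule ℝ V) : ℕ :=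
  posIndexOn (fun x => -Q x) Y

/-- The signature of `Q` on `Y`. -/
noncomputable def signatureOn {V : Type*} [AddCommGroup V] [Module ℝ V]
    (Q : V → ℝ) (Y : Submodule ℝ V) : ℤ :=
  (posIndexOn Q Y : ℤ) - negIndexOn Q Y

/-- The Hörmander index `(X, Y, Z, W) = ind Q_W − ind Q_Z (= ½(sign Q_Z − sign Q_W))`,
the quadratic forms being taken on `Y` (they descend to `Y/(X ∩ Y)`). -/
noncomputable def hIndex {V : Type*} [AddCommGroup V] [Module ℝ V]
    (ω : LinearMap.BilinForm ℝ V) (X Y Z W : Submodule ℝ V) : ℤ :=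
  (negIndexOn (hQuad ω X W) Y : ℤ) - negIndexOn (hQuad ω X Z) Y


namespace HIdx

open Module Submodule

variable {V : Type*} [AddCommGroup V] [Module ℝ V]
variable {V₂ : Type*} [AddCommGroup V₂] [Module ℝ V₂]

/-- The defining set of `posIndexOn`. -/
def PosSet (Q : V → ℝ) (Y : Submodule ℝ V) : Set ℕ :=
  {d | ∃ W : Submodule ℝ V, W ≤ Y ∧ Module.finrank ℝ W = d ∧ ∀ x ∈ W, x ≠ 0 → 0 < Q x}

theorem posIndexOn_eq (Q : V → ℝ) (Y : Submodule ℝ V) :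
    posIndexOn Q Y = sSup (PosSet Q Y) := rfl

theorem zero_mem_posSet (Q : V → ℝ) (Y : Submodule ℝ V) : 0 ∈ PosSet Q Y := by
  refine ⟨⊥, bot_le, finrank_bot ℝ V, ?_⟩
  intro x hx hx0
  exact absurd (Submodule.mem_bot ℝ |>.mp hx) hx0

theorem posSet_nonempty (Q : V → ℝ) (Y : Submodule ℝ V) : (PosSet Q Y).Nonempty :=
  ⟨0, zero_mem_posSet Q Y⟩

theorem posSet_bddAbove [FiniteDimensional ℝ V] (Q : V → ℝ) (Y : Submodule ℝ V) :
    BddAbove (PosSet Q Y) := by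
  refine ⟨Module.finrank ℝ V, ?_⟩
  rintro d ⟨W, -, rfl, -⟩
  exact W.finrank_le

theorem le_posIndexOn [FiniteDimensional ℝ V] {Q : V → ℝ} {Y : Submodule ℝ V} {d : ℕ}
    (h : d ∈ PosSet Q Y) : d ≤ posIndexOn Q Y :=
  le_csSup (posSet_bddAbove Q Y) h

theorem posIndexOn_le {Q : V → ℝ} {Y : Submodule ℝ V} {n : ℕ}
    (h : ∀ d ∈ PosSet Q Y, d ≤ n) : posIndexOn Q Y ≤ n :=
  csSup_le (posSet_nonempty Q Y) h

theorem posIndexOn_mem [FiniteDimensional ℝ V] (Q : V → ℝ) (Y : Submodule ℝ V) :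
    posIndexOn Q Y ∈ PosSet Q Y :=
  Nat.sSup_mem (posSet_nonempty Q Y) (posSet_bddAbove Q Y)

/-- Transport of the positive index along an injective-on-`Y` linear map. -/
theorem posIndexOn_map [FiniteDimensional ℝ V] [FiniteDimensional ℝ V₂]
    (f : V →ₗ[ℝ] V₂) {Q₁ : V → ℝ} {Q₂ : V₂ → ℝ} {Y : Submodule ℝ V}
    (hinj : ∀ x ∈ Y, f x = 0 → x = 0)
    (hQ : ∀ x ∈ Y, Q₂ (f x) = Q₁ x) :
    posIndexOn Q₁ Y = posIndexOn Q₂ (Y.map f) := by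
  apply le_antisymm
  · apply posIndexOn_le
    rintro d ⟨W, hWY, rfl, hpos⟩
    apply le_posIndexOn
    refine ⟨W.map f, Submodule.map_mono hWY, ?_, ?_⟩
    · have hker : LinearMap.ker (f.comp W.subtype) = ⊥ := by
        rw [LinearMap.ker_eq_bot']
        intro m hm
        exact Subtype.ext (hinj m (hWY m.2) hm)
      have : W.map f = LinearMap.range (f.comp W.subtype) := by
        rw [LinearMap.range_comp, Submodule.range_subtype]
      rw [this, LinearMap.finrank_range_of_inj (LinearMap.ker_eq_bot.mp hker)]
    · rintro x hx hx0
      rcases Submodule.mem_map.mp hx with ⟨y, hy, rfl⟩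
      have hy0 : y ≠ 0 := by rintro rfl; exact hx0 (map_zero f)
      rw [hQ y (hWY hy)]
      exact hpos y hy hy0
  · apply posIndexOn_le
    rintro d ⟨W₂, hW₂, rfl, hpos⟩
    set W₁ : Submodule ℝ V := Y ⊓ W₂.comap f with hW₁def
    have hmap : W₁.map f = W₂ := by
      apply le_antisymm
      · rintro x ⟨y, hy, rfl⟩
        exact hy.2
      · intro w hw
        rcases Submodule.mem_map.mp (hW₂ hw) with ⟨y, hy, rfl⟩
        exact Submodule.mem_map.mpr ⟨y, ⟨hy, by simpa using hw⟩, rfl⟩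
    have h1 : finrank ℝ W₂ ≤ finrank ℝ W₁ := by
      rw [← hmap]; exact Submodule.finrank_map_le f W₁
    refine le_trans h1 (le_posIndexOn ⟨W₁, inf_le_left, rfl, ?_⟩)
    intro x hx hx0
    have hfx : f x ∈ W₂ := hx.2
    have hfx0 : f x ≠ 0 := fun h => hx0 (hinj x hx.1 h)
    rw [← hQ x hx.1]
    exact hpos _ hfx hfx0

end HIdx

namespace HIdx

open Module Submodule

variable {V : Type*} [AddCommGroup V] [Module ℝ V] [FiniteDimensional ℝ V]

/-- Negative-semidefinite near-complement of a maximal positive subspace. -/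
theorem exists_nsd (B : LinearMap.BilinForm ℝ V) (U : Submodule ℝ V)
    (hsymm : ∀ x ∈ U, ∀ y ∈ U, B x y = B y x)
    (P : Submodule ℝ V) (hPU : P ≤ U)
    (hPrank : finrank ℝ P = posIndexOn (fun v => B v v) U)
    (hPpos : ∀ x ∈ P, x ≠ 0 → 0 < B x x) :
    ∃ N : Submodule ℝ V, N ≤ U ∧ (∀ x ∈ N, ∀ p ∈ P, B x p = 0) ∧
      (∀ x ∈ N, B x x ≤ 0) ∧ finrank ℝ U ≤ finrank ℝ N + finrank ℝ P := by
  classical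
  set φ : ↥U →ₗ[ℝ] (↥P →ₗ[ℝ] ℝ) := (B.compl₂ P.subtype).domRestrict U with hφ
  set N : Submodule ℝ V := (LinearMap.ker φ).map U.subtype with hN
  have hNU : N ≤ U := by
    rintro x ⟨y, hy, rfl⟩; exact y.2
  have hNorth : ∀ x ∈ N, ∀ p ∈ P, B x p = 0 := by
    rintro x ⟨y, hy, rfl⟩ p hp
    have := LinearMap.congr_fun (LinearMap.mem_ker.mp hy) ⟨p, hp⟩
    simpa [hφ] using this
  have hrank : finrank ℝ U ≤ finrank ℝ N + finrank ℝ P := by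
    have h1 : finrank ℝ N = finrank ℝ (LinearMap.ker φ) :=
      Submodule.finrank_map_subtype_eq U _
    have h2 : finrank ℝ (LinearMap.range φ) + finrank ℝ (LinearMap.ker φ) = finrank ℝ U :=
      LinearMap.finrank_range_add_finrank_ker φ
    have h3 : finrank ℝ (LinearMap.range φ) ≤ finrank ℝ (↥P →ₗ[ℝ] ℝ) :=
      (LinearMap.range φ).finrank_le
    have h4 : finrank ℝ (↥P →ₗ[ℝ] ℝ) = finrank ℝ P := Subspace.dual_finrank_eq
    omega
  refine ⟨N, hNU, hNorth, ?_, hrank⟩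
  intro x hxN
  by_contra hlt
  push_neg at hlt
  have hx0 : x ≠ 0 := by rintro rfl; simp at hlt
  have hxP : x ∉ P := fun hxP => by
    have := hNorth x hxN x hxP
    rw [this] at hlt; exact lt_irrefl 0 hlt
  have hdisj : P ⊓ (ℝ ∙ x) = ⊥ := by
    rw [Submodule.eq_bot_iff]
    rintro y ⟨hyP, hySpan⟩
    rcases Submodule.mem_span_singleton.mp hySpan with ⟨c, rfl⟩
    rcases eq_or_ne c 0 with rfl | hc
    · simp
    · exact absurd (by simpa [hc] using P.smul_mem c⁻¹ hyP : x ∈ P) hxP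
  have hposbig : ∀ y ∈ P ⊔ (ℝ ∙ x), y ≠ 0 → 0 < B y y := by
    intro y hy hy0
    rcases Submodule.mem_sup.mp hy with ⟨p, hp, s, hs, rfl⟩
    rcases Submodule.mem_span_singleton.mp hs with ⟨c, rfl⟩
    have hxp : B x p = 0 := hNorth x hxN p hp
    have hpx : B p x = 0 := (hsymm x (hNU hxN) p (hPU hp)).symm.trans hxp
    have hexp : B (p + c • x) (p + c • x) = B p p + c ^ 2 * B x x := by
      simp only [map_add, LinearMap.add_apply, map_smul, LinearMap.smul_apply,
        smul_eq_mul, hxp, hpx]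
      ring
    rw [hexp]
    rcases eq_or_ne c 0 with rfl | hc
    · have hp0 : p ≠ 0 := by simpa using hy0
      have := hPpos p hp hp0
      simpa using this
    · have h1 : 0 < c ^ 2 * B x x := mul_pos (by positivity) hlt
      rcases eq_or_ne p 0 with rfl | hp0
      · simpa using h1
      · have h2 := hPpos p hp hp0
        linarith
  have hrank2 : finrank ℝ (P ⊔ (ℝ ∙ x) : Submodule ℝ V) = finrank ℝ P + 1 := by
    have := Submodule.finrank_sup_add_finrank_inf_eq P (ℝ ∙ x)
    rw [hdisj] at this
    simp only [finrank_bot, add_zero] at this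
    rw [this, finrank_span_singleton hx0]
  have hle : finrank ℝ P + 1 ≤ posIndexOn (fun v => B v v) U := by
    apply le_posIndexOn
    exact ⟨P ⊔ (ℝ ∙ x), sup_le hPU ((Submodule.span_singleton_le_iff_mem x U).mpr
      (hNU hxN)), hrank2, hposbig⟩
  omega

end HIdx

namespace HIdx

open Module Submodule

variable {V : Type*} [AddCommGroup V] [Module ℝ V] [FiniteDimensional ℝ V]

/-- Additivity of the positive index over an orthogonal internal direct sum. -/
theorem posIndexOn_sup (B : LinearMap.BilinForm ℝ V) (T U₁ U₂ : Submodule ℝ V)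
    (h1 : U₁ ≤ T) (h2 : U₂ ≤ T)
    (hdis : U₁ ⊓ U₂ = ⊥) (hsup : U₁ ⊔ U₂ = T)
    (hsymm : ∀ x ∈ T, ∀ y ∈ T, B x y = B y x)
    (horth : ∀ x ∈ U₁, ∀ y ∈ U₂, B x y = 0) :
    posIndexOn (fun v => B v v) T
      = posIndexOn (fun v => B v v) U₁ + posIndexOn (fun v => B v v) U₂ := by
  have horth' : ∀ x ∈ U₂, ∀ y ∈ U₁, B x y = 0 := fun x hx y hy =>
    (hsymm x (h2 hx) y (h1 hy)).trans (horth y hy x hx)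
  apply le_antisymm
  · -- get nsd complements in each piece
    obtain ⟨P₁, hP₁U, hP₁rank, hP₁pos⟩ := posIndexOn_mem (fun v => B v v) U₁
    obtain ⟨P₂, hP₂U, hP₂rank, hP₂pos⟩ := posIndexOn_mem (fun v => B v v) U₂
    have hs₁ : ∀ x ∈ U₁, ∀ y ∈ U₁, B x y = B y x := fun x hx y hy =>
      hsymm x (h1 hx) y (h1 hy)
    have hs₂ : ∀ x ∈ U₂, ∀ y ∈ U₂, B x y = B y x := fun x hx y hy =>
      hsymm x (h2 hx) y (h2 hy)
    obtain ⟨N₁, hN₁U, -, hN₁neg, hN₁rank⟩ := exists_nsd B U₁ hs₁ P₁ hP₁U hP₁rank hP₁pos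
    obtain ⟨N₂, hN₂U, -, hN₂neg, hN₂rank⟩ := exists_nsd B U₂ hs₂ P₂ hP₂U hP₂rank hP₂pos
    have hNneg : ∀ x ∈ N₁ ⊔ N₂, B x x ≤ 0 := by
      intro x hx
      rcases Submodule.mem_sup.mp hx with ⟨a, ha, b, hb, rfl⟩
      have hab : B a b = 0 := horth a (hN₁U ha) b (hN₂U hb)
      have hba : B b a = 0 := horth' b (hN₂U hb) a (hN₁U ha)
      have : B (a + b) (a + b) = B a a + B b b := by
        simp only [map_add, LinearMap.add_apply, hab, hba]; ring
      rw [this]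
      exact add_nonpos (hN₁neg a ha) (hN₂neg b hb)
    have hNrank : finrank ℝ N₁ + finrank ℝ N₂ = finrank ℝ (N₁ ⊔ N₂ : Submodule ℝ V) := by
      have h := Submodule.finrank_sup_add_finrank_inf_eq N₁ N₂
      have hbot : N₁ ⊓ N₂ = ⊥ := by
        rw [Submodule.eq_bot_iff]
        intro y hy
        have : y ∈ U₁ ⊓ U₂ := ⟨hN₁U hy.1, hN₂U hy.2⟩
        rw [hdis] at this; exact this
      rw [hbot] at h
      simp only [finrank_bot, add_zero] at h
      omega
    have hT : finrank ℝ U₁ + finrank ℝ U₂ = finrank ℝ T := by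
      have := Submodule.finrank_sup_add_finrank_inf_eq U₁ U₂
      rw [hdis, hsup] at this
      simp only [finrank_bot, add_zero] at this
      omega
    obtain ⟨P, hPT, hPrank, hPpos⟩ := posIndexOn_mem (fun v => B v v) T
    have hPN : P ⊓ (N₁ ⊔ N₂) = ⊥ := by
      rw [Submodule.eq_bot_iff]
      intro y hy
      by_contra hy0
      exact absurd (hNneg y hy.2) (not_le.mpr (hPpos y hy.1 hy0))
    have hPNrank : finrank ℝ P + finrank ℝ (N₁ ⊔ N₂ : Submodule ℝ V) ≤ finrank ℝ T := by
      have h := Submodule.finrank_sup_add_finrank_inf_eq P (N₁ ⊔ N₂)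
      rw [hPN] at h
      simp only [finrank_bot, add_zero] at h
      have : finrank ℝ (P ⊔ (N₁ ⊔ N₂) : Submodule ℝ V) ≤ finrank ℝ T :=
        Submodule.finrank_mono (sup_le hPT (sup_le (hN₁U.trans h1) (hN₂U.trans h2)))
      omega
    omega
  · obtain ⟨P₁, hP₁U, hP₁rank, hP₁pos⟩ := posIndexOn_mem (fun v => B v v) U₁
    obtain ⟨P₂, hP₂U, hP₂rank, hP₂pos⟩ := posIndexOn_mem (fun v => B v v) U₂
    rw [← hP₁rank, ← hP₂rank]
    apply le_posIndexOn
    refine ⟨P₁ ⊔ P₂, sup_le (hP₁U.trans h1) (hP₂U.trans h2), ?_, ?_⟩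
    · have := Submodule.finrank_sup_add_finrank_inf_eq P₁ P₂
      have hbot : P₁ ⊓ P₂ = ⊥ := by
        rw [Submodule.eq_bot_iff]
        intro y hy
        have : y ∈ U₁ ⊓ U₂ := ⟨hP₁U hy.1, hP₂U hy.2⟩
        rw [hdis] at this; exact this
      rw [hbot] at this
      simp only [finrank_bot, add_zero] at this
      omega
    · intro x hx hx0
      rcases Submodule.mem_sup.mp hx with ⟨a, ha, b, hb, rfl⟩
      have hab : B a b = 0 := horth a (hP₁U ha) b (hP₂U hb)
      have hba : B b a = 0 := horth' b (hP₂U hb) a (hP₁U ha)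
      show 0 < B (a + b) (a + b)
      have hexp : B (a + b) (a + b) = B a a + B b b := by
        simp only [map_add, LinearMap.add_apply, hab, hba]; ring
      rw [hexp]
      rcases eq_or_ne a 0 with rfl | ha0
      · have hb0 : b ≠ 0 := by simpa using hx0
        simpa using hP₂pos b hb hb0
      · have h1' := hP₁pos a ha ha0
        rcases eq_or_ne b 0 with rfl | hb0
        · simpa using h1'
        · have h2' := hP₂pos b hb hb0
          linarith

/-- For a form nondegenerate on `T`, positive and negative indices add to `finrank T`. -/
theorem posIndexOn_add_neg (B : LinearMap.BilinForm ℝ V) (T : Submodule ℝ V)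
    (hsymm : ∀ x ∈ T, ∀ y ∈ T, B x y = B y x)
    (hnd : ∀ x ∈ T, (∀ y ∈ T, B x y = 0) → x = 0) :
    posIndexOn (fun v => B v v) T + posIndexOn (fun v => -(B v v)) T = finrank ℝ T := by
  obtain ⟨P, hPT, hPrank, hPpos⟩ := posIndexOn_mem (fun v => B v v) T
  obtain ⟨N', hN'T, hN'rank, hN'pos⟩ := posIndexOn_mem (fun v => -(B v v)) T
  apply le_antisymm
  · have hPN : P ⊓ N' = ⊥ := by
      rw [Submodule.eq_bot_iff]
      intro y hy
      by_contra hy0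
      have h1 := hPpos y hy.1 hy0
      have h2 := hN'pos y hy.2 hy0
      simp only [neg_pos] at h2
      linarith
    have h := Submodule.finrank_sup_add_finrank_inf_eq P N'
    rw [hPN] at h
    simp only [finrank_bot, add_zero] at h
    have : finrank ℝ (P ⊔ N' : Submodule ℝ V) ≤ finrank ℝ T :=
      Submodule.finrank_mono (sup_le hPT hN'T)
    omega
  · obtain ⟨N, hNT, hNP, hNneg, hNrank⟩ := exists_nsd B T hsymm P hPT hPrank hPpos
    have hNdef : ∀ x ∈ N, x ≠ 0 → 0 < -(B x x) := by
      intro x hx hx0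
      rcases lt_or_eq_of_le (hNneg x hx) with h | h
      · linarith
      -- B x x = 0 : derive x = 0
      exfalso
      apply hx0
      apply hnd x (hNT hx)
      -- show x orthogonal to all of T = P ⊔ N
      have hPN : P ⊓ N = ⊥ := by
        rw [Submodule.eq_bot_iff]
        intro y hy
        by_contra hy0
        exact absurd (hNneg y hy.2) (not_le.mpr (hPpos y hy.1 hy0))
      have hsupT : P ⊔ N = T := by
        apply Submodule.eq_of_le_of_finrank_le (sup_le hPT hNT)
        have h := Submodule.finrank_sup_add_finrank_inf_eq P N
        rw [hPN] at h
        simp only [finrank_bot, add_zero] at h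
        omega
      intro y hy
      rw [← hsupT] at hy
      rcases Submodule.mem_sup.mp hy with ⟨p, hp, m, hm, rfl⟩
      have hxp : B x p = 0 := hNP x hx p hp
      have hxm : B x m = 0 := by
        by_contra hc
        -- quadratic in t : B (m + t x) (m + t x) = B m m + 2 t B x m ≤ 0 for all t
        set t : ℝ := (1 - B m m) / (2 * B x m) with ht
        have hmem : m + t • x ∈ N := N.add_mem hm (N.smul_mem t hx)
        have hle := hNneg _ hmem
        have hmx : B m x = B x m := hsymm m (hNT hm) x (hNT hx)
        have hexp : B (m + t • x) (m + t • x)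
            = B m m + t * B x m + t * B x m + t * t * B x x := by
          simp only [map_add, LinearMap.add_apply, map_smul, LinearMap.smul_apply,
            smul_eq_mul, hmx]
          ring
        rw [hexp, h] at hle
        have ht2 : t * B x m = (1 - B m m) / 2 := by
          rw [ht]; field_simp
        rw [ht2] at hle
        linarith
      simp only [map_add, hxp, hxm, add_zero]
    have : finrank ℝ N ≤ posIndexOn (fun v => -(B v v)) T :=
      le_posIndexOn ⟨N, hNT, rfl, hNdef⟩
    omega

end HIdx

namespace HIdx

open Module Submodule LinearMap

variable {V : Type*} [AddCommGroup V] [Module ℝ V] [FiniteDimensional ℝ V]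

/-- The Schur-complement identity for positive indices. -/
theorem schur_identity (a b : LinearMap.BilinForm ℝ V) (Z₀ : Submodule ℝ V) (C : V →ₗ[ℝ] V)
    (ha : ∀ x ∈ Z₀, ∀ y ∈ Z₀, a x y = a y x)
    (hb : ∀ x ∈ Z₀, ∀ y ∈ Z₀, b x y = b y x)
    (hC : ∀ z ∈ Z₀, C z ∈ Z₀)
    (hab : ∀ x ∈ Z₀, ∀ y ∈ Z₀, a x (C y) = b x y) :
    posIndexOn (fun v => a v v) Z₀ + posIndexOn (fun v => b v v - a (C v) (C v)) Z₀
      = posIndexOn (fun v => a v v - b v v) Z₀ + posIndexOn (fun v => b v v) Z₀ := by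
  classical
  set fst := LinearMap.fst ℝ V V
  set snd := LinearMap.snd ℝ V V
  set m : LinearMap.BilinForm ℝ (V × V) :=
    a.compl₁₂ fst fst + b.compl₁₂ fst snd + b.compl₁₂ snd fst + b.compl₁₂ snd snd with hm
  have hmapp : ∀ p q : V × V, m p q = a p.1 q.1 + b p.1 q.2 + b p.2 q.1 + b p.2 q.2 := by
    intro p q; rfl
  set f₁ : V →ₗ[ℝ] V × V := LinearMap.inl ℝ V V with hf₁
  set fC : V →ₗ[ℝ] V × V := LinearMap.prod (-C) LinearMap.id with hfC
  set f₃ : V →ₗ[ℝ] V × V := LinearMap.prod LinearMap.id (-LinearMap.id) with hf₃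
  set f₄ : V →ₗ[ℝ] V × V := LinearMap.inr ℝ V V with hf₄
  set T : Submodule ℝ (V × V) := Z₀.prod Z₀ with hT
  have hT₁ : Z₀.map f₁ ≤ T := by rintro x ⟨z, hz, rfl⟩; exact ⟨hz, Z₀.zero_mem⟩
  have hG : Z₀.map fC ≤ T := by
    rintro x ⟨z, hz, rfl⟩; exact ⟨Z₀.neg_mem (hC z hz), hz⟩
  have hF₁ : Z₀.map f₃ ≤ T := by rintro x ⟨z, hz, rfl⟩; exact ⟨hz, Z₀.neg_mem hz⟩
  have hF₂ : Z₀.map f₄ ≤ T := by rintro x ⟨z, hz, rfl⟩; exact ⟨Z₀.zero_mem, hz⟩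
  have hmsymm : ∀ p ∈ T, ∀ q ∈ T, m p q = m q p := by
    rintro p ⟨hp1, hp2⟩ q ⟨hq1, hq2⟩
    rw [hmapp, hmapp, ha p.1 hp1 q.1 hq1, hb p.1 hp1 q.2 hq2, hb p.2 hp2 q.1 hq1,
      hb p.2 hp2 q.2 hq2]
    ring
  -- first decomposition
  have hdec1 : posIndexOn (fun p : V × V => m p p) T
      = posIndexOn (fun p : V × V => m p p) (Z₀.map f₁)
        + posIndexOn (fun p : V × V => m p p) (Z₀.map fC) := by
    apply posIndexOn_sup m T _ _ hT₁ hG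
    · rw [Submodule.eq_bot_iff]
      rintro y ⟨⟨z, hz, rfl⟩, ⟨z', hz', hzz⟩⟩
      have h2 : z' = 0 := by
        have := congrArg Prod.snd hzz
        simpa [hfC, hf₁] using this
      subst h2
      simp only [map_zero] at hzz
      exact hzz.symm
    · apply le_antisymm (sup_le hT₁ hG)
      rintro ⟨u, v⟩ ⟨hu, hv⟩
      have : (u, v) = f₁ (u + C v) + fC v := by
        simp [hf₁, hfC, Prod.ext_iff]
      rw [this]
      exact Submodule.add_mem _ (Submodule.mem_sup_left ⟨u + C v, Z₀.add_mem hu (hC v hv), rfl⟩)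
        (Submodule.mem_sup_right ⟨v, hv, rfl⟩)
    · exact hmsymm
    · rintro p ⟨z, hz, rfl⟩ q ⟨z', hz', rfl⟩
      have : m (f₁ z) (fC z') = a z (-(C z')) + b z z' := by
        simp [hmapp, hf₁, hfC]
      rw [this, map_neg, hab z hz z' hz']
      ring
  -- second decomposition
  have hdec2 : posIndexOn (fun p : V × V => m p p) T
      = posIndexOn (fun p : V × V => m p p) (Z₀.map f₃)
        + posIndexOn (fun p : V × V => m p p) (Z₀.map f₄) := by
    apply posIndexOn_sup m T _ _ hF₁ hF₂
    · rw [Submodule.eq_bot_iff]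
      rintro y ⟨⟨z, hz, rfl⟩, ⟨z', hz', hzz⟩⟩
      have h2 : z = 0 := by
        have := congrArg Prod.fst hzz
        simpa [hf₃, hf₄] using this.symm
      subst h2
      simp [hf₃]
    · apply le_antisymm (sup_le hF₁ hF₂)
      rintro ⟨u, v⟩ ⟨hu, hv⟩
      have : (u, v) = f₃ u + f₄ (v + u) := by
        simp [hf₃, hf₄, Prod.ext_iff]
      rw [this]
      exact Submodule.add_mem _ (Submodule.mem_sup_left ⟨u, hu, rfl⟩)
        (Submodule.mem_sup_right ⟨v + u, Z₀.add_mem hv hu, rfl⟩)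
    · exact hmsymm
    · rintro p ⟨z, hz, rfl⟩ q ⟨z', hz', rfl⟩
      have : m (f₃ z) (f₄ z') = b z z' + b (-z) z' := by
        simp [hmapp, hf₃, hf₄]
      rw [this, map_neg]
      simp
  -- transports
  have ht₁ : posIndexOn (fun v => a v v) Z₀ = posIndexOn (fun p : V × V => m p p) (Z₀.map f₁) := by
    apply posIndexOn_map f₁
    · intro x _ hx
      have := congrArg Prod.fst hx
      simpa [hf₁] using this
    · intro x _
      simp [hmapp, hf₁]
  have htC : posIndexOn (fun v => b v v - a (C v) (C v)) Z₀
      = posIndexOn (fun p : V × V => m p p) (Z₀.map fC) := by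
    apply posIndexOn_map fC
    · intro x _ hx
      have := congrArg Prod.snd hx
      simpa [hfC] using this
    · intro x hx
      have h1 : m (fC x) (fC x) = a (C x) (C x) - b (C x) x - b x (C x) + b x x := by
        simp only [hmapp, hfC, LinearMap.prod_apply, Function.prod, LinearMap.neg_apply,
          LinearMap.id_apply, map_neg, LinearMap.neg_apply]
        ring
      have h2 : a (C x) (C x) = b (C x) x := hab (C x) (hC x hx) x hx
      have h3 : b x (C x) = b (C x) x := hb x hx (C x) (hC x hx)
      rw [h1, h2, h3]; ring
  have ht₃ : posIndexOn (fun v => a v v - b v v) Z₀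
      = posIndexOn (fun p : V × V => m p p) (Z₀.map f₃) := by
    apply posIndexOn_map f₃
    · intro x _ hx
      have := congrArg Prod.fst hx
      simpa [hf₃] using this
    · intro x _
      have h1 : m (f₃ x) (f₃ x) = a x x - b x x - b x x + b x x := by
        simp only [hmapp, hf₃, LinearMap.prod_apply, Function.prod, LinearMap.neg_apply,
          LinearMap.id_apply, map_neg]
        ring
      rw [h1]; ring
  have ht₄ : posIndexOn (fun v => b v v) Z₀
      = posIndexOn (fun p : V × V => m p p) (Z₀.map f₄) := by
    apply posIndexOn_map f₄
    · intro x _ hx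
      have := congrArg Prod.snd hx
      simpa [hf₄] using this
    · intro x _
      simp [hmapp, hf₄]
  rw [ht₁, htC, ht₃, ht₄, ← hdec1, hdec2]

end HIdx

namespace HIdx

open Module Submodule

variable {V : Type*} [AddCommGroup V] [Module ℝ V]

theorem projAlong_eq_of {L M : Submodule ℝ V} (h : IsCompl L M) {x w : V}
    (hx : x ∈ L) (hw : w ∈ M) : projAlong L M (x + w) = x := by
  have h1 := Submodule.linearProjOfIsCompl_apply_left h ⟨x, hx⟩
  have h2 := Submodule.linearProjOfIsCompl_apply_right h ⟨w, hw⟩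
  simp only [projAlong, dif_pos h, LinearMap.coe_comp, Function.comp_apply, map_add]
  rw [show (L.linearProjOfIsCompl M h) x = ⟨x, hx⟩ from h1,
    show (L.linearProjOfIsCompl M h) w = 0 from h2]
  simp

theorem projAlong_mem {L M : Submodule ℝ V} (h : IsCompl L M) (v : V) :
    projAlong L M v ∈ L := by
  simp only [projAlong, dif_pos h, LinearMap.coe_comp, Function.comp_apply]
  exact (L.linearProjOfIsCompl M h v).2

theorem sub_projAlong_mem {L M : Submodule ℝ V} (h : IsCompl L M) (v : V) :
    v - projAlong L M v ∈ M := by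
  rcases Submodule.mem_sup.mp (by rw [h.sup_eq_top]; trivial : v ∈ L ⊔ M) with
    ⟨x, hx, w, hw, rfl⟩
  rw [projAlong_eq_of h hx hw]
  simpa using hw

variable [FiniteDimensional ℝ V]

theorem isCompl_of_inf_rank {L M : Submodule ℝ V} (h : L ⊓ M = ⊥)
    (hr : finrank ℝ V ≤ finrank ℝ L + finrank ℝ M) : IsCompl L M := by
  refine ⟨disjoint_iff.mpr h, codisjoint_iff.mpr ?_⟩
  have h2 := Submodule.finrank_sup_add_finrank_inf_eq L M
  rw [h] at h2
  simp only [finrank_bot, add_zero] at h2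
  apply Submodule.eq_top_of_finrank_eq
  have := Submodule.finrank_le (L ⊔ M)
  omega

omit [FiniteDimensional ℝ V] in
theorem finrank_map_of_inj (f : V →ₗ[ℝ] V) (S : Submodule ℝ V)
    (hinj : ∀ x ∈ S, f x = 0 → x = 0) : finrank ℝ (S.map f) = finrank ℝ S := by
  have hker : LinearMap.ker (f.comp S.subtype) = ⊥ := by
    rw [LinearMap.ker_eq_bot']
    intro m hm
    exact Subtype.ext (hinj m m.2 hm)
  have : S.map f = LinearMap.range (f.comp S.subtype) := by
    rw [LinearMap.range_comp, Submodule.range_subtype]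
  rw [this, LinearMap.finrank_range_of_inj (LinearMap.ker_eq_bot.mp hker)]

theorem map_eq_of_inj (f : V →ₗ[ℝ] V) (S T : Submodule ℝ V) (hle : S.map f ≤ T)
    (hinj : ∀ x ∈ S, f x = 0 → x = 0) (hrank : finrank ℝ S = finrank ℝ T) :
    S.map f = T :=
  Submodule.eq_of_le_of_finrank_le hle (by rw [finrank_map_of_inj f S hinj, hrank])

end HIdx

set_option maxHeartbeats 1000000
open Module Submodule HIdx

/-- The Hörmander index satisfies `(X, Y, Z, W) = −(Z, W, X, Y)` for
Lagrangian planes with `Z`, `W` each transversal to `X` and `Y` (and `X`, `Y` each transversal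
to `Z` and `W`). -/
theorem hIndex_antisymm_pairs {V : Type*} [AddCommGroup V] [Module ℝ V] [FiniteDimensional ℝ V]
    (ω : LinearMap.BilinForm ℝ V)
    (halt : ∀ x, ω x x = 0)
    (hnondeg : ∀ x, (∀ y, ω x y = 0) → x = 0)
    (X Y Z W : Submodule ℝ V)
    (hX : IsLagrangian ω X) (hY : IsLagrangian ω Y)
    (hZ : IsLagrangian ω Z) (hW : IsLagrangian ω W)
    (hZX : Z ⊓ X = ⊥) (hZY : Z ⊓ Y = ⊥) (hWX : W ⊓ X = ⊥) (hWY : W ⊓ Y = ⊥) :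
    hIndex ω X Y Z W = - hIndex ω Z W X Y := by
  classical
  obtain ⟨hXl, hXr⟩ := hX
  obtain ⟨hYl, hYr⟩ := hY
  obtain ⟨hZl, hZr⟩ := hZ
  obtain ⟨hWl, hWr⟩ := hW
  have hXY : finrank ℝ X = finrank ℝ Y := by omega
  have hXZ : finrank ℝ X = finrank ℝ Z := by omega
  have hXW : finrank ℝ X = finrank ℝ W := by omega
  have hskew : ∀ u v, ω u v = -(ω v u) := by
    intro u v
    have h := halt (u + v)
    simp only [map_add, LinearMap.add_apply, halt] at h
    linarith
  -- transversality
  have cZX : IsCompl Z X := isCompl_of_inf_rank hZX (by omega)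
  have cXZ : IsCompl X Z := cZX.symm
  have cYZ : IsCompl Y Z := isCompl_of_inf_rank (by rw [inf_comm]; exact hZY) (by omega)
  have cWX : IsCompl W X := isCompl_of_inf_rank hWX (by omega)
  -- graph maps
  set Dm : V →ₗ[ℝ] V := projAlong Y Z - LinearMap.id with hDm
  set Em : V →ₗ[ℝ] V := projAlong W X - LinearMap.id with hEm
  have hDmv : ∀ v, Dm v = projAlong Y Z v - v := fun v => rfl
  have hEmv : ∀ v, Em v = projAlong W X v - v := fun v => rfl
  have hDmZ : ∀ v, Dm v ∈ Z := by
    intro v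
    rw [hDmv]
    simpa [neg_sub] using Z.neg_mem (sub_projAlong_mem cYZ v)
  have hEmX : ∀ v, Em v ∈ X := by
    intro v
    rw [hEmv]
    simpa [neg_sub] using X.neg_mem (sub_projAlong_mem cWX v)
  have hfYx : ∀ v, projAlong Y Z v = v + Dm v := by
    intro v; rw [hDmv]; abel
  have hfWx : ∀ v, projAlong W X v = v + Em v := by
    intro v; rw [hEmv]; abel
  have hfYY : ∀ v, projAlong Y Z v ∈ Y := projAlong_mem cYZ
  have hfWW : ∀ v, projAlong W X v ∈ W := projAlong_mem cWX
  -- symmetry of the graph forms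
  have hdsym : ∀ x ∈ X, ∀ x' ∈ X, ω x (Dm x') = ω x' (Dm x) := by
    intro x hx x' hx'
    have h0 : ω (projAlong Y Z x) (projAlong Y Z x') = 0 :=
      hYl _ (hfYY x) _ (hfYY x')
    rw [hfYx, hfYx] at h0
    simp only [map_add, LinearMap.add_apply] at h0
    rw [hXl x hx x' hx', hZl _ (hDmZ x) _ (hDmZ x')] at h0
    have hs := hskew (Dm x) x'
    linarith
  have hesym : ∀ z ∈ Z, ∀ z' ∈ Z, ω (Em z) z' = ω (Em z') z := by
    intro z hz z' hz'
    have h0 : ω (projAlong W X z) (projAlong W X z') = 0 :=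
      hWl _ (hfWW z) _ (hfWW z')
    rw [hfWx, hfWx] at h0
    simp only [map_add, LinearMap.add_apply] at h0
    rw [hZl z hz z' hz', hXl _ (hEmX z) _ (hEmX z')] at h0
    have hs := hskew z (Em z')
    linarith
  -- projection identities
  have hPZ : ∀ x ∈ X, projAlong Z X (projAlong Y Z x) = Dm x := by
    intro x hx
    rw [hfYx, show x + Dm x = Dm x + x by abel]
    exact projAlong_eq_of cZX (hDmZ x) hx
  have hPX : ∀ z ∈ Z, projAlong X Z (projAlong W X z) = Em z := by
    intro z hz
    rw [hfWx, show z + Em z = Em z + z by abel]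
    exact projAlong_eq_of cXZ (hEmX z) hz
  have hPY : ∀ z ∈ Z, projAlong Y Z (projAlong W X z) = projAlong Y Z (Em z) := by
    intro z hz
    have hd : projAlong W X z = projAlong Y Z (Em z) + (z - Dm (Em z)) := by
      rw [hfYx (Em z), hfWx z]; abel
    rw [hd, projAlong_eq_of cYZ (hfYY (Em z)) (Z.sub_mem hz (hDmZ _))]
  have hPW : ∀ x ∈ X, projAlong W X (projAlong Y Z x) = projAlong W X (Dm x) := by
    intro x hx
    have hd : projAlong Y Z x = projAlong W X (Dm x) + (x - Em (Dm x)) := by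
      rw [hfWx (Dm x), hfYx x]; abel
    rw [hd, projAlong_eq_of cWX (hfWW (Dm x)) (X.sub_mem hx (hEmX _))]
  -- injectivity of graph maps
  have hfYinj : ∀ x ∈ X, projAlong Y Z x = 0 → x = 0 := by
    intro x hx h0
    rw [hfYx] at h0
    have hxZ : x ∈ Z := by
      have : x = -Dm x := by linear_combination (norm := abel) h0
      rw [this]; exact Z.neg_mem (hDmZ x)
    have : x ∈ Z ⊓ X := ⟨hxZ, hx⟩
    rw [hZX] at this; exact this
  have hfWinj : ∀ z ∈ Z, projAlong W X z = 0 → z = 0 := by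
    intro z hz h0
    rw [hfWx] at h0
    have hzX : z ∈ X := by
      have : z = -Em z := by linear_combination (norm := abel) h0
      rw [this]; exact X.neg_mem (hEmX z)
    have : z ∈ Z ⊓ X := ⟨hz, hzX⟩
    rw [hZX] at this; exact this
  have hYmap : X.map (projAlong Y Z) = Y := by
    apply map_eq_of_inj _ _ _ _ hfYinj hXY
    rintro v ⟨x, hx, rfl⟩; exact hfYY x
  have hWmap : Z.map (projAlong W X) = W := by
    apply map_eq_of_inj _ _ _ _ hfWinj (hXZ ▸ hXW)
    rintro v ⟨z, hz, rfl⟩; exact hfWW z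
  -- the twist map G = id - E D  is a bijection of X
  set Gm : V →ₗ[ℝ] V := LinearMap.id - Em ∘ₗ Dm with hGm
  have hGmv : ∀ v, Gm v = v - Em (Dm v) := fun v => rfl
  have hGmX : ∀ v ∈ X, Gm v ∈ X := by
    intro v hv; rw [hGmv]; exact X.sub_mem hv (hEmX _)
  have hGinj : ∀ x ∈ X, Gm x = 0 → x = 0 := by
    intro x hx h0
    rw [hGmv] at h0
    have hEq : projAlong W X (Dm x) = projAlong Y Z x := by
      rw [hfWx (Dm x), hfYx x]
      have : x = Em (Dm x) := by linear_combination (norm := abel) h0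
      rw [← this]; abel
    have hmem : projAlong Y Z x ∈ W ⊓ Y := by
      constructor
      · rw [← hEq]; exact hfWW (Dm x)
      · exact hfYY x
    rw [hWY] at hmem
    exact hfYinj x hx hmem
  have hGX : X.map Gm = X := map_eq_of_inj Gm X X (by rintro v ⟨x, hx, rfl⟩; exact hGmX x hx)
    hGinj rfl
  -- quadratic form identities
  have hq2 : ∀ x ∈ X, -hQuad ω X Z (projAlong Y Z x) = ω x (Dm x) := by
    intro x hx
    unfold hQuad
    rw [hPZ x hx, hfYx]
    simp only [map_add]
    rw [halt (Dm x), hskew (Dm x) x]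
    ring
  have hq1 : ∀ x ∈ X, -hQuad ω X W (projAlong Y Z x)
      = ω x (Dm x) - ω (Em (Dm x)) (Dm x) := by
    intro x hx
    unfold hQuad
    rw [hPW x hx, hfWx (Dm x), hfYx x]
    simp only [map_add, LinearMap.add_apply]
    rw [halt (Dm x), hXl _ (hEmX (Dm x)) x hx, hskew (Dm x) x]
    ring
  have hq4 : ∀ z ∈ Z, -hQuad ω Z X (projAlong W X z) = -(ω (Em z) z) := by
    intro z hz
    unfold hQuad
    rw [hPX z hz, hfWx]
    simp only [map_add]
    rw [halt (Em z), hskew (Em z) z]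
    ring
  have hq3 : ∀ z ∈ Z, -hQuad ω Z Y (projAlong W X z)
      = ω (Em z) (Dm (Em z)) - ω (Em z) z := by
    intro z hz
    unfold hQuad
    rw [hPY z hz, hfYx (Em z), hfWx z]
    simp only [map_add, LinearMap.add_apply]
    rw [halt (Em z), hZl _ (hDmZ (Em z)) z hz, hskew (Dm (Em z)) (Em z)]
    ring
  -- the block form on V × V
  set DE : V →ₗ[ℝ] V := Dm ∘ₗ Em with hDE
  set dB : LinearMap.BilinForm ℝ V := ω.compl₂ Dm with hdB
  set gB : LinearMap.BilinForm ℝ V := ω.compl₂ DE with hgB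
  set gB' : LinearMap.BilinForm ℝ V := -(ω ∘ₗ DE) with hgB'
  set sB : LinearMap.BilinForm ℝ V := (ω ∘ₗ Em).compl₂ DE - (ω ∘ₗ Em) with hsB
  set m : LinearMap.BilinForm ℝ (V × V) :=
    dB.compl₁₂ (LinearMap.fst ℝ V V) (LinearMap.fst ℝ V V)
      + gB.compl₁₂ (LinearMap.fst ℝ V V) (LinearMap.snd ℝ V V)
      + gB'.compl₁₂ (LinearMap.snd ℝ V V) (LinearMap.fst ℝ V V)
      + sB.compl₁₂ (LinearMap.snd ℝ V V) (LinearMap.snd ℝ V V) with hm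
  have hmapp : ∀ p q : V × V, m p q
      = ω p.1 (Dm q.1) + ω p.1 (Dm (Em q.2)) + (-(ω (Dm (Em p.2)) q.1))
        + (ω (Em p.2) (Dm (Em q.2)) - ω (Em p.2) q.2) := by
    intro p q
    simp [hm, hdB, hgB, hgB', hsB, hDE, LinearMap.compl₁₂_apply, LinearMap.compl₂_apply,
      LinearMap.sub_apply, LinearMap.add_apply, LinearMap.neg_apply, LinearMap.comp_apply]
  set T : Submodule ℝ (V × V) := X.prod Z with hT
  set f₁ : V →ₗ[ℝ] V × V := LinearMap.inl ℝ V V with hf₁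
  set gA : V →ₗ[ℝ] V × V := LinearMap.prod (-Em) LinearMap.id with hgA
  set hB : V →ₗ[ℝ] V × V := LinearMap.prod Gm Dm with hhB
  set f₄ : V →ₗ[ℝ] V × V := LinearMap.inr ℝ V V with hf₄
  have hf₁v : ∀ v, f₁ v = (v, 0) := fun v => rfl
  have hgAv : ∀ v, gA v = (-Em v, v) := fun v => rfl
  have hhBv : ∀ v, hB v = (Gm v, Dm v) := fun v => rfl
  have hf₄v : ∀ v, f₄ v = (0, v) := fun v => rfl
  have hT1le : X.map f₁ ≤ T := by
    rintro p ⟨x, hx, rfl⟩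
    rw [hf₁v]
    exact ⟨hx, Z.zero_mem⟩
  have hGAle : Z.map gA ≤ T := by
    rintro p ⟨z, hz, rfl⟩
    rw [hgAv]
    exact ⟨X.neg_mem (hEmX z), hz⟩
  have hHBle : X.map hB ≤ T := by
    rintro p ⟨x, hx, rfl⟩
    rw [hhBv]
    exact ⟨hGmX x hx, hDmZ x⟩
  have hF4le : Z.map f₄ ≤ T := by
    rintro p ⟨z, hz, rfl⟩
    rw [hf₄v]
    exact ⟨X.zero_mem, hz⟩
  have hmsym : ∀ p ∈ T, ∀ q ∈ T, m p q = m q p := by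
    intro p hp q hq
    obtain ⟨hp1, hp2⟩ := (Submodule.mem_prod.mp hp)
    obtain ⟨hq1, hq2⟩ := (Submodule.mem_prod.mp hq)
    rw [hmapp, hmapp]
    have e1 := hdsym p.1 hp1 q.1 hq1
    have e2 := hdsym (Em p.2) (hEmX _) (Em q.2) (hEmX _)
    have e3 := hesym p.2 hp2 q.2 hq2
    have s1 := hskew p.1 (Dm (Em q.2))
    have s2 := hskew q.1 (Dm (Em p.2))
    linarith
  -- first decomposition : D ⊕ (-E)
  have hd1 : posIndexOn (fun p : V × V => m p p) T
      = posIndexOn (fun p : V × V => m p p) (X.map f₁)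
        + posIndexOn (fun p : V × V => m p p) (Z.map gA) := by
    apply posIndexOn_sup m T _ _ hT1le hGAle
    · rw [Submodule.eq_bot_iff]
      rintro p ⟨⟨x, hx, rfl⟩, ⟨z, hz, hzz⟩⟩
      have h2 : z = 0 := by
        have := congrArg Prod.snd hzz
        simpa [hgAv, hf₁v] using this
      subst h2
      rw [hgAv] at hzz
      rw [← hzz]
      simp
    · apply le_antisymm (sup_le hT1le hGAle)
      rintro ⟨u, v⟩ hp
      obtain ⟨hu, hv⟩ := Submodule.mem_prod.mp hp
      have hrep : (u, v) = f₁ (u + Em v) + gA v := by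
        rw [hf₁v, hgAv, Prod.mk_add_mk]
        simp [Prod.ext_iff]
      rw [hrep]
      exact Submodule.add_mem _
        (Submodule.mem_sup_left ⟨u + Em v, X.add_mem hu (hEmX v), rfl⟩)
        (Submodule.mem_sup_right ⟨v, hv, rfl⟩)
    · exact hmsym
    · rintro p ⟨x, hx, rfl⟩ q ⟨z, hz, rfl⟩
      rw [hmapp, hf₁v, hgAv]
      simp
  -- second decomposition : (D - DED) ⊕ (EDE - E)
  have hd2 : posIndexOn (fun p : V × V => m p p) T
      = posIndexOn (fun p : V × V => m p p) (X.map hB)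
        + posIndexOn (fun p : V × V => m p p) (Z.map f₄) := by
    apply posIndexOn_sup m T _ _ hHBle hF4le
    · rw [Submodule.eq_bot_iff]
      rintro p ⟨⟨x, hx, rfl⟩, ⟨z, hz, hzz⟩⟩
      have h2 : Gm x = 0 := by
        have := congrArg Prod.fst hzz
        simpa [hhBv, hf₄v] using this.symm
      have h3 : x = 0 := hGinj x hx h2
      subst h3
      rw [hhBv]
      simp
    · apply le_antisymm (sup_le hHBle hF4le)
      rintro ⟨u, v⟩ hp
      obtain ⟨hu, hv⟩ := Submodule.mem_prod.mp hp
      obtain ⟨x, hx, hGx⟩ : ∃ x ∈ X, Gm x = u := by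
        have : u ∈ X.map Gm := by rw [hGX]; exact hu
        rcases this with ⟨x, hx, hGx⟩
        exact ⟨x, hx, hGx⟩
      have hrep : (u, v) = hB x + f₄ (v - Dm x) := by
        rw [hhBv, hf₄v, Prod.mk_add_mk, hGx]
        simp [Prod.ext_iff]
      rw [hrep]
      exact Submodule.add_mem _
        (Submodule.mem_sup_left ⟨x, hx, rfl⟩)
        (Submodule.mem_sup_right ⟨v - Dm x, Z.sub_mem hv (hDmZ x), rfl⟩)
    · exact hmsym
    · rintro p ⟨x, hx, rfl⟩ q ⟨z, hz, rfl⟩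
      rw [hmapp, hhBv, hf₄v]
      simp only [map_zero, LinearMap.map_zero]
      have e1 : ω (Gm x) (Dm (Em z)) = ω x (Dm (Em z)) - ω (Em (Dm x)) (Dm (Em z)) := by
        rw [hGmv]; simp [map_sub, LinearMap.sub_apply]
      have e2 : ω x (Dm (Em z)) = ω (Em z) (Dm x) := hdsym x hx (Em z) (hEmX z)
      have e3 : ω (Em (Dm x)) z = ω (Em z) (Dm x) := hesym (Dm x) (hDmZ x) z hz
      have z1 := halt (0 : V)
      linarith [map_zero ω, e1, e2, e3]
  -- transports to the product pieces
  have ht1 : posIndexOn (fun x => ω x (Dm x)) X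
      = posIndexOn (fun p : V × V => m p p) (X.map f₁) := by
    apply posIndexOn_map f₁
    · intro x _ hx
      have := congrArg Prod.fst hx
      simpa [hf₁v] using this
    · intro x _
      show m (f₁ x) (f₁ x) = ω x (Dm x)
      rw [hmapp, hf₁v]
      simp
  have htA : posIndexOn (fun z => -(ω (Em z) z)) Z
      = posIndexOn (fun p : V × V => m p p) (Z.map gA) := by
    apply posIndexOn_map gA
    · intro z _ hz
      have := congrArg Prod.snd hz
      simpa [hgAv] using this
    · intro z _
      show m (gA z) (gA z) = -(ω (Em z) z)
      rw [hmapp, hgAv]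
      simp only [map_neg, LinearMap.neg_apply]
      have s1 := hskew (Dm (Em z)) (Em z)
      linarith
  have htB : posIndexOn (fun x => ω x (Dm x) - ω (Em (Dm x)) (Dm x)) X
      = posIndexOn (fun p : V × V => m p p) (X.map hB) := by
    apply posIndexOn_map hB
    · intro x hx hx0
      have h1 : Gm x = 0 := by
        have := congrArg Prod.fst hx0
        simpa [hhBv] using this
      exact hGinj x hx h1
    · intro x hx
      show m (hB x) (hB x) = ω x (Dm x) - ω (Em (Dm x)) (Dm x)
      rw [hmapp, hhBv]
      have hGDm : Dm (Gm x) = Dm x - Dm (Em (Dm x)) := by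
        rw [hGmv]; simp [map_sub]
      have e1 : ω (Gm x) (Dm (Gm x))
          = ω x (Dm x) - ω x (Dm (Em (Dm x))) - ω (Em (Dm x)) (Dm x)
            + ω (Em (Dm x)) (Dm (Em (Dm x))) := by
        rw [hGDm, hGmv]
        simp only [map_sub, LinearMap.sub_apply]
        ring
      have e2 : ω (Gm x) (Dm (Em (Dm x)))
          = ω x (Dm (Em (Dm x))) - ω (Em (Dm x)) (Dm (Em (Dm x))) := by
        rw [hGmv]; simp [map_sub, LinearMap.sub_apply]
      have e3 := hskew (Dm (Em (Dm x))) (Gm x)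
      have e4 : ω (Gm x) (Dm (Em (Dm x)))
          = ω x (Dm (Em (Dm x))) - ω (Em (Dm x)) (Dm (Em (Dm x))) := e2
      have e5 : ω x (Dm (Em (Dm x))) = ω (Em (Dm x)) (Dm x) :=
        hdsym x hx (Em (Dm x)) (hEmX _)
      linarith
  have ht4 : posIndexOn (fun z => ω (Em z) (Dm (Em z)) - ω (Em z) z) Z
      = posIndexOn (fun p : V × V => m p p) (Z.map f₄) := by
    apply posIndexOn_map f₄
    · intro z _ hz
      have := congrArg Prod.snd hz
      simpa [hf₄v] using this
    · intro z _
      show m (f₄ z) (f₄ z) = ω (Em z) (Dm (Em z)) - ω (Em z) z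
      rw [hmapp, hf₄v]
      simp
  -- transports from Y and W
  have hA : posIndexOn (fun x => ω x (Dm x) - ω (Em (Dm x)) (Dm x)) X
      = posIndexOn (fun v => -hQuad ω X W v) Y := by
    rw [← hYmap]
    exact posIndexOn_map (projAlong Y Z) hfYinj hq1
  have hB2 : posIndexOn (fun x => ω x (Dm x)) X
      = posIndexOn (fun v => -hQuad ω X Z v) Y := by
    rw [← hYmap]
    exact posIndexOn_map (projAlong Y Z) hfYinj hq2
  have hC : posIndexOn (fun z => ω (Em z) (Dm (Em z)) - ω (Em z) z) Z
      = posIndexOn (fun v => -hQuad ω Z Y v) W := by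
    rw [← hWmap]
    exact posIndexOn_map (projAlong W X) hfWinj hq3
  have hD4 : posIndexOn (fun z => -(ω (Em z) z)) Z
      = posIndexOn (fun v => -hQuad ω Z X v) W := by
    rw [← hWmap]
    exact posIndexOn_map (projAlong W X) hfWinj hq4
  -- assemble
  simp only [hIndex, negIndexOn]
  rw [← hA, ← hB2, ← hC, ← hD4, ht1, htA, htB, ht4]
  omega
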